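/- arXiv:1902.02523 — 2 statements merged into one kernel-verified Lean document; each statement's English description precedes it below -/
import Mathlib

section
/- Under the assumptions of the weighted KL-average theorem, the minimum value of the cost J(f) = Σᵢ ωⁱ D_KL(f ‖ fⁱ), attained at the normalized geometric mean f̄, equals −log(∫ ∏ᵢ [fⁱ(x)]^{ωⁱ} dx). -/
/-! For weights summing to one, `∑ᵢ ωⁱ log (f̄ / fⁱ) = log (f̄ / ∏ᵢ (fⁱ)^{ωⁱ})` pointwise, and
for the normalized geometric mean `f̄ = ∏ᵢ (fⁱ)^{ωⁱ} / Z` the right-hand side is the constant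
`-log Z`. Integrating against the probability density `f̄` gives `J(f̄) = -log Z`. -/

open MeasureTheory Real

/-- Kullback-Leibler divergence between densities on ℝᵈ. -/
noncomputable def klDiv {d : ℕ} (f g : (Fin d → ℝ) → ℝ) : ℝ :=
  ∫ x, f x * Real.log (f x / g x)

theorem Real.log_prod_rpow {ι : Type*} (s : Finset ι) (a w : ι → ℝ) (ha : ∀ i ∈ s, 0 < a i) :
    log (∏ i ∈ s, a i ^ w i) = ∑ i ∈ s, w i * log (a i) := by
  rw [log_prod fun i hi => (rpow_pos_of_pos (ha i hi) _).ne']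
  exact Finset.sum_congr rfl fun i hi => log_rpow (ha i hi) _

theorem Real.sum_mul_log_div_eq_log_div_prod_rpow {ι : Type*} [Fintype ι] (a w : ι → ℝ)
    (ha : ∀ i, 0 < a i) (hw : ∑ i, w i = 1) {c : ℝ} (hc : c ≠ 0) :
    ∑ i, w i * log (c / a i) = log (c / ∏ i, a i ^ w i) := by
  have hprod : ∏ i, a i ^ w i ≠ 0 :=
    (Finset.prod_pos fun i _ => rpow_pos_of_pos (ha i) _).ne'
  rw [log_div hc hprod, log_prod_rpow _ _ _ fun i _ => ha i]
  simp_rw [log_div hc (ha _).ne', mul_sub, Finset.sum_sub_distrib, ← Finset.sum_mul, hw, one_mul]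

theorem sum_mul_klDiv_eq_integral {ι : Type*} [Fintype ι] {d : ℕ} (g : (Fin d → ℝ) → ℝ)
    (f : ι → (Fin d → ℝ) → ℝ) (w : ι → ℝ)
    (hint : ∀ i, Integrable fun x => g x * log (g x / f i x)) :
    ∑ i, w i * klDiv g (f i) = ∫ x, g x * ∑ i, w i * log (g x / f i x) := by
  simp_rw [klDiv, ← integral_const_mul]
  rw [← integral_finsetSum _ fun i _ => (hint i).const_mul _]
  congr 1 with x
  rw [Finset.mul_sum]
  exact Finset.sum_congr rfl fun i _ => by ring

theorem wkla_min_value_general {d N : ℕ} (f : Fin N → (Fin d → ℝ) → ℝ) (ω : Fin N → ℝ)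
    (hfpos : ∀ i x, 0 < f i x)
    (hω1 : ∑ i, ω i = 1)
    (Z : ℝ) (hZ : Z = ∫ x, ∏ i, f i x ^ ω i) (hZpos : 0 < Z)
    (hint : ∀ i, Integrable fun x : Fin d → ℝ =>
      ((∏ j, f j x ^ ω j) / Z) * Real.log ((∏ j, f j x ^ ω j) / Z / f i x)) :
    ∑ i, ω i * klDiv (fun x => (∏ j, f j x ^ ω j) / Z) (f i) = -Real.log Z := by
  have hPpos : ∀ x, 0 < ∏ j, f j x ^ ω j := fun x =>
    Finset.prod_pos fun j _ => rpow_pos_of_pos (hfpos j x) _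
  have hlog : ∀ x, ∑ i, ω i * log ((∏ j, f j x ^ ω j) / Z / f i x) = -log Z := fun x => by
    rw [sum_mul_log_div_eq_log_div_prod_rpow _ _ (fun i => hfpos i x) hω1
      (div_pos (hPpos x) hZpos).ne', div_div_cancel_left' (hPpos x).ne', log_inv]
  rw [sum_mul_klDiv_eq_integral _ _ _ hint]
  simp_rw [hlog]
  rw [integral_mul_const, integral_div, ← hZ, div_self hZpos.ne', one_mul]

theorem wkla_min_value {d N : ℕ} (f : Fin N → (Fin d → ℝ) → ℝ) (ω : Fin N → ℝ)
    (hfpos : ∀ i x, 0 < f i x) (hfmeas : ∀ i, Measurable (f i))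
    (hfint : ∀ i, (∫ x, f i x) = 1)
    (hω : ∀ i, 0 ≤ ω i) (hω1 : ∑ i, ω i = 1)
    (Z : ℝ) (hZ : Z = ∫ x, ∏ i, f i x ^ ω i) (hZpos : 0 < Z)
    (hZint : Integrable fun x : Fin d → ℝ => ∏ i, f i x ^ ω i)
    (hint : ∀ i, Integrable fun x : Fin d → ℝ =>
      ((∏ j, f j x ^ ω j) / Z) * Real.log ((∏ j, f j x ^ ω j) / Z / f i x)) :
    ∑ i, ω i * klDiv (fun x => (∏ j, f j x ^ ω j) / Z) (f i) = -Real.log Z :=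
  wkla_min_value_general f ω hfpos hω1 Z hZ hZpos hint
end

section
/- Let p¹,…,pᴺ be probability mass functions on {0,1,…,N_max}, s¹,…,sᴺ positive probability densities on ℝᵈ, and ωⁱ ≥ 0 with Σᵢ ωⁱ = 1. Define W = ∫ ∏ᵢ [sⁱ(x)]^{ωⁱ} dx (assumed finite and positive) and cⁿ = ∏ᵢ [pⁱ(n)]^{ωⁱ}. Then the set integral of the weighted geometric mean of the i.i.d. cluster densities fⁱ(X) = |X|! pⁱ(|X|) ∏_{x∈X} sⁱ(x) equals Σ_{n=0}^{N_max} cⁿ Wⁿ; equivalently, the GCI divergence equals −log(Σ_{n=0}^{N_max} cⁿ Wⁿ). -/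
open MeasureTheory Real

/-!
Taking the weighted geometric mean of the i.i.d. cluster densities factor by factor, the
`n!` survives unchanged because the weights sum to one, the cardinality masses combine to
`cⁿ`, and the spatial part becomes the product over the `n` points of the single-point mean
`∏ᵢ sⁱ(x)^{ωⁱ}`. By Fubini the integral of that product over `n`-tuples is `Wⁿ`, and the
`n!` cancels against the `1/n!` of the set integral.
-/

namespace Real

variable {ι κ : Type*}

theorem prod_rpow_eq_self_of_sum_eq_one (s : Finset ι) {a : ℝ} (ha : 0 < a) {ω : ι → ℝ}
    (hω : ∑ i ∈ s, ω i = 1) : ∏ i ∈ s, a ^ ω i = a := by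
  rw [← rpow_sum_of_pos ha, hω, rpow_one]

theorem prod_mul_rpow (s : Finset ι) {a b : ι → ℝ} (ha : ∀ i ∈ s, 0 ≤ a i)
    (hb : ∀ i ∈ s, 0 ≤ b i) (ω : ι → ℝ) :
    ∏ i ∈ s, (a i * b i) ^ ω i = (∏ i ∈ s, a i ^ ω i) * ∏ i ∈ s, b i ^ ω i := by
  rw [← Finset.prod_mul_distrib]
  exact Finset.prod_congr rfl fun i hi => mul_rpow (ha i hi) (hb i hi)

theorem prod_prod_rpow_comm (s : Finset ι) (t : Finset κ) {f : ι → κ → ℝ}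
    (hf : ∀ i ∈ s, ∀ k ∈ t, 0 ≤ f i k) (ω : ι → ℝ) :
    ∏ i ∈ s, (∏ k ∈ t, f i k) ^ ω i = ∏ k ∈ t, ∏ i ∈ s, f i k ^ ω i := by
  calc ∏ i ∈ s, (∏ k ∈ t, f i k) ^ ω i = ∏ i ∈ s, ∏ k ∈ t, f i k ^ ω i :=
        Finset.prod_congr rfl fun i hi => (finsetProd_rpow t (f i) (hf i hi) (ω i)).symm
    _ = ∏ k ∈ t, ∏ i ∈ s, f i k ^ ω i := Finset.prod_comm

end Real

theorem integral_prod_rpow_iidCluster {ι E : Type*} [Fintype ι] [MeasureSpace E]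
    [SigmaFinite (volume : Measure E)] (n : ℕ) {q : ι → ℝ} {s : ι → E → ℝ} {ω : ι → ℝ}
    (hq : ∀ i, 0 ≤ q i) (hs : ∀ i x, 0 ≤ s i x) (hω : ∑ i, ω i = 1) :
    ∫ x : Fin n → E, ∏ i, ((n.factorial : ℝ) * q i * ∏ k, s i (x k)) ^ ω i
      = n.factorial * (∏ i, q i ^ ω i) * (∫ y, ∏ i, s i y ^ ω i) ^ n := by
  have hfac : (0 : ℝ) < n.factorial := by positivity
  have hpoint : ∀ x : Fin n → E, ∏ i, ((n.factorial : ℝ) * q i * ∏ k, s i (x k)) ^ ω i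
      = n.factorial * (∏ i, q i ^ ω i) * ∏ k, ∏ i, s i (x k) ^ ω i := by
    intro x
    rw [prod_mul_rpow _ (fun i _ => mul_nonneg hfac.le (hq i))
        (fun i _ => Finset.prod_nonneg fun k _ => hs i (x k)),
      prod_mul_rpow _ (fun _ _ => hfac.le) (fun i _ => hq i),
      prod_rpow_eq_self_of_sum_eq_one _ hfac hω,
      prod_prod_rpow_comm _ _ (fun i _ k _ => hs i (x k))]
  simp only [hpoint, integral_const_mul]
  rw [integral_fintype_prod_volume_eq_pow (fun y => ∏ i, s i y ^ ω i), Fintype.card_fin]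

theorem gci_iid_cluster_set_integral_general {d N : ℕ} (Nmax : ℕ)
    (p : Fin N → ℕ → ℝ) (s : Fin N → (Fin d → ℝ) → ℝ) (ω : Fin N → ℝ)
    (hp : ∀ i n, 0 ≤ p i n)
    (hs : ∀ i x, 0 < s i x)
    (hω1 : ∑ i, ω i = 1)
    (W : ℝ) (hW : W = ∫ x, ∏ i, s i x ^ ω i)
    (c : ℕ → ℝ) (hc : ∀ n, c n = ∏ i, p i n ^ ω i) :
    ∑ n ∈ Finset.range (Nmax + 1), ((n.factorial : ℝ))⁻¹ *
        ∫ x : Fin n → (Fin d → ℝ),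
          ∏ i, ((n.factorial : ℝ) * p i n * ∏ k, s i (x k)) ^ ω i
      = ∑ n ∈ Finset.range (Nmax + 1), c n * W ^ n := by
  refine Finset.sum_congr rfl fun n _ => ?_
  rw [integral_prod_rpow_iidCluster n (hp · n) (fun i x => (hs i x).le) hω1, hc, ← hW]
  field_simp

/-- The set integral of the weighted geometric mean of i.i.d. cluster densities
`fⁱ(X) = |X|! pⁱ(|X|) ∏_{x∈X} sⁱ(x)`, expressed via the tuple representation of
finite sets, equals `Σ_{n=0}^{Nmax} cⁿ Wⁿ`. -/
theorem gci_iid_cluster_set_integral {d N : ℕ} (Nmax : ℕ)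
    (p : Fin N → ℕ → ℝ) (s : Fin N → (Fin d → ℝ) → ℝ) (ω : Fin N → ℝ)
    (hp : ∀ i n, 0 ≤ p i n) (hpsupp : ∀ i n, Nmax < n → p i n = 0)
    (hp1 : ∀ i, ∑ n ∈ Finset.range (Nmax + 1), p i n = 1)
    (hs : ∀ i x, 0 < s i x) (hsmeas : ∀ i, Measurable (s i))
    (hsint : ∀ i, (∫ x, s i x) = 1)
    (hω : ∀ i, 0 ≤ ω i) (hω1 : ∑ i, ω i = 1)
    (W : ℝ) (hW : W = ∫ x, ∏ i, s i x ^ ω i) (hWpos : 0 < W)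
    (hWint : Integrable fun x : Fin d → ℝ => ∏ i, s i x ^ ω i)
    (c : ℕ → ℝ) (hc : ∀ n, c n = ∏ i, p i n ^ ω i) :
    ∑ n ∈ Finset.range (Nmax + 1), ((n.factorial : ℝ))⁻¹ *
        ∫ x : Fin n → (Fin d → ℝ),
          ∏ i, ((n.factorial : ℝ) * p i n * ∏ k, s i (x k)) ^ ω i
      = ∑ n ∈ Finset.range (Nmax + 1), c n * W ^ n :=
  gci_iid_cluster_set_integral_general Nmax p s ω hp hs hω1 W hW c hc
end
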